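/- arXiv:1105.5324 — 2 statements merged into one kernel-verified Lean document; each statement's English description precedes it below -/
import Mathlib

section
/- Let I be a type and (X_i)_{i ∈ I} a family of nonempty types. Consider the partial order P whose underlying set is the disjoint union Σ_{i ∈ I} (ℕ × X_i), where (i, n, x) is strictly below (j, m, y) if and only if i = j and n > m (and ≤ is the reflexive closure of this relation). Then for every maximal antichain A of P and every index i ∈ I, there is exactly one element of A whose index component is i. Consequently, every maximal antichain of P determines a choice function for the family (X_i)_{i ∈ I}, namely the function sending each i to the X_i-component of the unique element of A with index i. -/
/-- The underlying set of Miller's partial order: the disjoint union of the sets `ℕ × X i`. -/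
def MillerP {I : Type*} (X : I → Type*) : Type _ := Σ i : I, ℕ × X i

/-- The order on `MillerP X`: `(i, n, x) ≤ (j, m, y)` iff they are equal, or
`i = j` and `n > m` (the reflexive closure of the strict order). -/
def MillerLe {I : Type*} {X : I → Type*} (a b : MillerP X) : Prop :=
  a = b ∨ (a.1 = b.1 ∧ b.2.1 < a.2.1)

/-- Compatibility in `MillerP X`: existence of a common lower bound. -/
def MillerCompatible {I : Type*} {X : I → Type*} (p q : MillerP X) : Prop :=
  ∃ r : MillerP X, MillerLe r p ∧ MillerLe r q

/-- Every maximal antichain of `MillerP X` contains exactly one element with index `i`,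
for each `i`; consequently it determines a choice function for the family `X`. -/
theorem maximal_antichain_gives_choice_function {I : Type*} (X : I → Type*)
    (hX : ∀ i, Nonempty (X i)) (A : Set (MillerP X))
    (hanti : ∀ p ∈ A, ∀ q ∈ A, p ≠ q → ¬ MillerCompatible p q)
    (hmax : ∀ p : MillerP X, ∃ q ∈ A, MillerCompatible p q) :
    (∀ i : I, ∃! a : MillerP X, a ∈ A ∧ a.1 = i) ∧
    ∃ f : ∀ i : I, X i, ∀ i : I, ∃ n : ℕ, (⟨i, n, f i⟩ : MillerP X) ∈ A := by
  have key : ∀ i : I, ∃! a : MillerP X, a ∈ A ∧ a.1 = i := by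
    intro i
    obtain ⟨x⟩ := hX i
    obtain ⟨q, hqA, r, hr1, hr2⟩ := hmax ⟨i, 0, x⟩
    have hri : r.1 = i := by
      rcases hr1 with h | h
      · rw [h]
      · exact h.1
    have hqi : q.1 = i := by
      rcases hr2 with h | h
      · rw [← h, hri]
      · rw [← h.1, hri]
    refine ⟨q, ⟨hqA, hqi⟩, ?_⟩
    rintro b ⟨hbA, hbi⟩
    by_contra hne
    apply hanti b hbA q hqA hne
    exact ⟨⟨i, max b.2.1 q.2.1 + 1, x⟩,
      Or.inr ⟨hbi.symm, Nat.lt_succ_of_le (le_max_left _ _)⟩,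
      Or.inr ⟨hqi.symm, Nat.lt_succ_of_le (le_max_right _ _)⟩⟩
  refine ⟨key, ?_⟩
  have h : ∀ i, ∃ x : X i, ∃ n, (⟨i, n, x⟩ : MillerP X) ∈ A := by
    intro i
    obtain ⟨⟨j, n, x⟩, ⟨hA, hj⟩, -⟩ := key i
    subst hj
    exact ⟨x, n, hA⟩
  choose f n hf using h
  exact ⟨f, fun i => ⟨n i, hf i⟩⟩
end

section
/- Let n, k be natural numbers with k > n, and let π be a permutation of ℕ (a bijection ℕ → ℕ) such that π(i) = i for all i < n. Then there exist permutations π₁ and π₂ of ℕ such that π = π₁ ∘ π₂, the permutation π₁ has finite support (the set {i : π₁(i) ≠ i} is finite) and satisfies π₁(i) = i for all i < n, and π₂ satisfies π₂(i) = i for all i < k. -/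
theorem perm_decompose_aux (n : ℕ) : ∀ (m : ℕ) (π : Equiv.Perm ℕ),
    (∀ i < n, π i = i) →
    ∃ π₁ π₂ : Equiv.Perm ℕ,
      (∀ x : ℕ, π x = π₁ (π₂ x)) ∧
      {i : ℕ | π₁ i ≠ i}.Finite ∧
      (∀ i < n, π₁ i = i) ∧
      (∀ i < n + m, π₂ i = i) := by
  intro m
  induction m with
  | zero =>
    intro π hπ
    exact ⟨1, π, fun x => rfl, by simp, by simp, hπ⟩
  | succ m ih =>
    intro π hπ
    obtain ⟨π₁, π₂, hcomp, hfin, h1, h2⟩ := ih π hπ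
    set j := n + m with hjdef
    have hj : n + m ≤ π₂ j := by
      by_contra h
      push_neg at h
      have h' := h2 _ h
      have := π₂.injective h'
      omega
    refine ⟨π₁ * Equiv.swap j (π₂ j), (Equiv.swap j (π₂ j))⁻¹ * π₂, ?_, ?_, ?_, ?_⟩
    · intro x
      simp [hcomp x]
    · apply Set.Finite.subset (hfin.union (Set.Finite.insert j (Set.finite_singleton (π₂ j))))
      intro i hi
      by_cases h : i = j ∨ i = π₂ j
      · right; simpa using h
      · push_neg at h
        left
        simp only [Set.mem_setOf_eq, Equiv.Perm.mul_apply] at hi ⊢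
        rwa [Equiv.swap_apply_of_ne_of_ne h.1 h.2] at hi
    · intro i hi
      have hij : i ≠ j := by omega
      have hij2 : i ≠ π₂ j := by omega
      simp only [Equiv.Perm.mul_apply, Equiv.swap_apply_of_ne_of_ne hij hij2]
      exact h1 i hi
    · intro i hi
      simp only [Equiv.Perm.mul_apply, Equiv.swap_inv]
      rcases Nat.lt_or_ge i (n + m) with h | h
      · rw [h2 i h, Equiv.swap_apply_of_ne_of_ne (by omega) (by omega)]
      · have : i = j := by omega
        rw [this, Equiv.swap_apply_right]

/-- Every permutation of `ℕ` fixing all `i < n` factors as `π₁ ∘ π₂`, where `π₁` has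
finite support and fixes all `i < n`, and `π₂` fixes all `i < k` (for any `k > n`). -/
theorem perm_decompose (n k : ℕ) (hk : k > n) (π : Equiv.Perm ℕ)
    (hπ : ∀ i < n, π i = i) :
    ∃ π₁ π₂ : Equiv.Perm ℕ,
      (∀ x : ℕ, π x = π₁ (π₂ x)) ∧
      {i : ℕ | π₁ i ≠ i}.Finite ∧
      (∀ i < n, π₁ i = i) ∧
      (∀ i < k, π₂ i = i) := by
  obtain ⟨π₁, π₂, h1, h2, h3, h4⟩ := perm_decompose_aux n (k - n) π hπ
  exact ⟨π₁, π₂, h1, h2, h3, fun i hi => h4 i (by omega)⟩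
end
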